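/- arXiv:1909.07153 — 2 statements merged into one kernel-verified Lean document; each statement's English description precedes it below -/
import Mathlib

section
/- For η ∈ {0,1}^ℤ and x ∈ ℤ, let η^{x,x+1} be η with the values at sites x and x+1 swapped. The rates c_{x,x+1}(η) = ηₓ(1−η_{x+1})(θ + α η_{x−1} + β η_{x+2}) + η_{x+1}(1−ηₓ)(θ + α η_{x+2} + β η_{x−1}) satisfy the detailed balance condition c_{x,x+1}(η)·exp(H(η^{x,x+1}) − H(η)) = c_{x,x+1}(η^{x,x+1}), where H(η) = q·∑_{y=x−1}^{x+1} η_y η_{y+1} with q = ln((θ+α)/(θ+β)). -/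
/-- Swap of the values of a configuration at sites `x` and `x+1`. -/
def swapConf (x : ℤ) (η : ℤ → ℝ) : ℤ → ℝ :=
  fun y => if y = x then η (x + 1) else if y = x + 1 then η x else η y

/-- Exchange rate with finite-range interaction. -/
def rateFR (θ α β : ℝ) (x : ℤ) (η : ℤ → ℝ) : ℝ :=
  η x * (1 - η (x + 1)) * (θ + α * η (x - 1) + β * η (x + 2))
    + η (x + 1) * (1 - η x) * (θ + α * η (x + 2) + β * η (x - 1))

/-- The local Hamiltonian over the bonds affected by the swap at `(x, x+1)`. -/
noncomputable def hamLoc (q : ℝ) (x : ℤ) (η : ℤ → ℝ) : ℝ :=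
  q * ∑ y ∈ Finset.Icc (x - 1) (x + 1), η y * η (y + 1)

lemma icc_eq (x : ℤ) : Finset.Icc (x - 1) (x + 1) = {x - 1, x, x + 1} := by
  ext y; simp; omega

lemma hamLoc_eq (q : ℝ) (x : ℤ) (η : ℤ → ℝ) :
    hamLoc q x η = q * (η (x-1) * η x + η x * η (x+1) + η (x+1) * η (x+2)) := by
  have h1 : x - 1 ≠ x := by omega
  have h2 : x - 1 ≠ x + 1 := by omega
  have h3 : x ≠ x + 1 := by omega
  rw [hamLoc, icc_eq]
  rw [Finset.sum_insert (by simp [h1, h2]), Finset.sum_insert (by simp [h3]),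
    Finset.sum_singleton]
  have : x - 1 + 1 = x := by omega
  rw [this]
  ring_nf

theorem detailed_balance_finite_range (θ α β : ℝ)
    (hθα : 0 < θ + α) (hθβ : 0 < θ + β) (hθαβ : 0 < θ + α + β)
    (x : ℤ) (η : ℤ → ℝ) (hη : ∀ y, η y = 0 ∨ η y = 1) :
    rateFR θ α β x η *
        Real.exp (hamLoc (Real.log ((θ + α) / (θ + β))) x (swapConf x η)
          - hamLoc (Real.log ((θ + α) / (θ + β))) x η)
      = rateFR θ α β x (swapConf x η) := by
  set q := Real.log ((θ + α) / (θ + β)) with hq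
  have s1 : swapConf x η (x - 1) = η (x - 1) := by
    simp [swapConf]; intro h; omega
  have s2 : swapConf x η x = η (x + 1) := by simp [swapConf]
  have s3 : swapConf x η (x + 1) = η x := by
    simp [swapConf]
  have s4 : swapConf x η (x + 2) = η (x + 2) := by
    simp [swapConf]
  have hratio : (θ + α) / (θ + β) > 0 := div_pos hθα hθβ
  have heq : Real.exp q = (θ + α) / (θ + β) := Real.exp_log hratio
  have heqn : Real.exp (-q) = (θ + β) / (θ + α) := by
    rw [Real.exp_neg, heq]; field_simp
  rw [hamLoc_eq, hamLoc_eq, rateFR, rateFR, s1, s2, s3, s4]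
  have hβ' : θ + β ≠ 0 := ne_of_gt hθβ
  have hα' : θ + α ≠ 0 := ne_of_gt hθα
  rcases hη (x - 1) with ha | ha <;> rcases hη x with hb | hb <;>
    rcases hη (x + 1) with hc | hc <;> rcases hη (x + 2) with hd | hd <;>
    rw [ha, hb, hc, hd] <;> ring_nf <;>
    simp [Real.exp_zero, heq, heqn] <;> field_simp <;> ring
end

section
/- Let K be a finite set and μ a probability measure on {0,1}^K with μ(η) > 0 for all η. Suppose c : {0,1}^K → [0,∞) and define (Lu)(η) := c(η)(u(σ(η)) − u(η)), where σ : {0,1}^K → {0,1}^K is an involution. Then for any positive function u on {0,1}^K, −∑_η (Lu)(η)/u(η) · μ(η) ≤ (1/2) ∑_η ( √(c(σ(η)) μ(σ(η))) − √(c(η) μ(η)) )². -/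
lemma key_amgm (a b t : ℝ) (ha : 0 ≤ a) (hb : 0 ≤ b) (ht : 0 < t) :
    a * (1 - t) + b * (1 - 1/t) ≤ (Real.sqrt b - Real.sqrt a) ^ 2 := by
  have hx : 2 * Real.sqrt (a * b) ≤ a * t + b / t := by
    have h1 : Real.sqrt (a * t) * Real.sqrt (b / t) = Real.sqrt (a * b) := by
      rw [← Real.sqrt_mul (by positivity)]
      congr 1
      field_simp
    have h2 := two_mul_le_add_sq (Real.sqrt (a * t)) (Real.sqrt (b / t))
    rw [Real.sq_sqrt (by positivity), Real.sq_sqrt (by positivity)] at h2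
    nlinarith [h1]
  have hab : Real.sqrt a * Real.sqrt b = Real.sqrt (a * b) := (Real.sqrt_mul ha b).symm
  have hsa := Real.sq_sqrt ha
  have hsb := Real.sq_sqrt hb
  have expand : (Real.sqrt b - Real.sqrt a) ^ 2
      = b - 2 * (Real.sqrt a * Real.sqrt b) + a := by
    rw [sub_sq, hsa, hsb]; ring
  rw [expand, hab]
  have hrw : a * (1 - t) + b * (1 - 1/t) = a + b - (a * t + b / t) := by ring
  linarith

theorem dirichlet_variational_ineq {K : Type*} [Fintype K] [DecidableEq K]
    (μ : (K → Bool) → ℝ) (hμpos : ∀ η, 0 < μ η) (hμsum : ∑ η, μ η = 1)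
    (c : (K → Bool) → ℝ) (hc : ∀ η, 0 ≤ c η)
    (σ : (K → Bool) → (K → Bool)) (hσ : Function.Involutive σ)
    (u : (K → Bool) → ℝ) (hu : ∀ η, 0 < u η) :
    - ∑ η, (c η * (u (σ η) - u η)) / u η * μ η
      ≤ (1 / 2) * ∑ η,
          (Real.sqrt (c (σ η) * μ (σ η)) - Real.sqrt (c η * μ η)) ^ 2 := by
  set F : (K → Bool) → ℝ := fun η => (c η * (u (σ η) - u η)) / u η * μ η with hF
  have h1 : ∑ η, F (σ η) = ∑ η, F η :=
    Fintype.sum_bijective σ hσ.bijective _ _ (fun η => rfl)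
  have h2 : - ∑ η, F η = (1/2) * ∑ η, (-(F η) - F (σ η)) := by
    rw [Finset.sum_sub_distrib, Finset.sum_neg_distrib, h1]
    ring
  rw [h2]
  apply mul_le_mul_of_nonneg_left _ (by norm_num : (0:ℝ) ≤ 1/2)
  apply Finset.sum_le_sum
  intro η _
  have hσσ : σ (σ η) = η := hσ η
  have huη := hu η
  have huσ := hu (σ η)
  have heq : -(F η) - F (σ η)
      = (c η * μ η) * (1 - u (σ η) / u η)
        + (c (σ η) * μ (σ η)) * (1 - 1 / (u (σ η) / u η)) := by
    simp only [hF, hσσ]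
    field_simp
    ring
  rw [heq]
  exact key_amgm _ _ _ (mul_nonneg (hc η) (hμpos η).le)
    (mul_nonneg (hc (σ η)) (hμpos (σ η)).le) (div_pos huσ huη)
end
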